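/- No future-directed Lipschitz timelike curve for g = −dt² + (1 + sqrt((t−|x|)₊))dx² starting at the origin reaches a point of A = {(t,x) : x > 0, 0 < t − x < f⁻¹(x)}; i.e., A ∩ I⁺(0) = ∅. -/

import Mathlib

/-!
Along a timelike curve `(α, β)` the null coordinate `Z = α - |β|` is strictly increasing, so
`Z ≥ 0`, the conformal factor is `ρ = 1 + √Z`, and `|β|' ≤ |β'| < α' / √(1 + √Z)`. Since
`f'(z) = (√(1 + √z) - 1)⁻¹`, this rearranges to `|β|' ≤ f'(Z) Z'`: the function `f(Z) - |β|`
is nondecreasing and vanishes at the origin. Hence every point `p` reached with `p.2 > 0` has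
`p.2 ≤ f(p.1 - p.2)`, i.e. `p.1 - p.2 ≥ f⁻¹(p.2)`, so `p ∉ A`.
-/

noncomputable def rho (t x : ℝ) : ℝ := 1 + Real.sqrt (max (t - |x|) 0)

noncomputable def f (y : ℝ) : ℝ :=
  4 / 3 * ((1 + Real.sqrt y) ^ ((3 : ℝ) / 2) - 1) + 2 * Real.sqrt y

open MeasureTheory Set Filter Topology Real

namespace AbsolutelyContinuousOnInterval

variable {φ : ℝ → ℝ} {a b : ℝ}

theorem monotoneOn_of_ae_deriv_nonneg (hφ : AbsolutelyContinuousOnInterval φ a b)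
    (h : ∀ᵐ x, x ∈ Ioo a b → 0 ≤ deriv φ x) : MonotoneOn φ (Icc a b) := by
  intro u hu v hv huv
  have hsub : uIcc u v ⊆ uIcc a b := by
    rw [uIcc_of_le huv]; exact (Icc_subset_Icc hu.1 hv.2).trans Icc_subset_uIcc
  have hnonneg : 0 ≤ᵐ[volume.restrict (Icc u v)] deriv φ := by
    rw [← Measure.restrict_congr_set Ioo_ae_eq_Icc, EventuallyLE,
      ae_restrict_iff' measurableSet_Ioo]
    filter_upwards [h] with x hx hxuv
    exact hx ⟨hu.1.trans_lt hxuv.1, hxuv.2.trans_le hv.2⟩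
  have := intervalIntegral.integral_nonneg_of_ae_restrict huv hnonneg
  rw [(hφ.mono hsub).integral_deriv_eq_sub] at this
  linarith

theorem strictMonoOn_of_ae_deriv_pos (hφ : AbsolutelyContinuousOnInterval φ a b)
    (h : ∀ᵐ x, x ∈ Ioo a b → 0 < deriv φ x) : StrictMonoOn φ (Icc a b) := by
  have hmono := hφ.monotoneOn_of_ae_deriv_nonneg (h.mono fun x hx hxab => (hx hxab).le)
  intro u hu v hv huv
  refine (hmono hu hv huv.le).lt_of_ne fun heq => ?_
  have hsub : Icc u v ⊆ Icc a b := Icc_subset_Icc hu.1 hv.2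
  have hconst : ∀ x ∈ Ioo u v, deriv φ x = 0 := fun x hx => by
    have hφx : φ =ᶠ[𝓝 x] fun _ => φ u := by
      filter_upwards [Ioo_mem_nhds hx.1 hx.2] with y hy
      have hy' : y ∈ Icc u v := Ioo_subset_Icc_self hy
      exact le_antisymm (heq ▸ hmono (hsub hy') hv hy'.2) (hmono hu (hsub hy') hy'.1)
    rw [hφx.deriv_eq, deriv_const]
  -- `φ` is constant on `[u, v]`, so `deriv φ` vanishes on the nonnull set `(u, v)`.
  have hnull : volume (Ioo u v) = 0 := by
    rw [measure_eq_zero_iff_ae_notMem]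
    filter_upwards [h] with x hx hxuv
    exact (hx ⟨hu.1.trans_lt hxuv.1, hxuv.2.trans_le hv.2⟩).ne' (hconst x hxuv)
  simp only [Real.volume_Ioo, ENNReal.ofReal_eq_zero, tsub_le_iff_right, zero_add] at hnull
  exact hnull.not_gt huv

end AbsolutelyContinuousOnInterval

theorem LipschitzOnWith.absolutelyContinuousOnInterval_of_le {φ : ℝ → ℝ} {K : NNReal} {a b : ℝ}
    (hφ : LipschitzOnWith K φ (Icc a b)) (hab : a ≤ b) : AbsolutelyContinuousOnInterval φ a b :=
  (uIcc_of_le hab ▸ hφ).absolutelyContinuousOnInterval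

theorem LipschitzOnWith.abs {X : Type*} [PseudoEMetricSpace X] {φ : X → ℝ} {K : NNReal}
    {s : Set X} (hφ : LipschitzOnWith K φ s) : LipschitzOnWith K (fun x => |φ x|) s := by
  simpa [Function.comp_def] using lipschitzWith_one_norm.comp_lipschitzOnWith hφ

theorem abs_deriv_abs_le {φ : ℝ → ℝ} {x b c : ℝ} (hb : HasDerivAt φ b x)
    (hc : HasDerivAt (fun y => |φ y|) c x) : |c| ≤ |b| := by
  refine le_of_tendsto_of_tendsto (hasDerivAt_iff_tendsto_slope.1 hc).abs
    (hasDerivAt_iff_tendsto_slope.1 hb).abs (Eventually.of_forall fun y => ?_)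
  simp only [slope_def_field, abs_div]
  gcongr ?_ / _
  exact abs_abs_sub_abs_le_abs_sub (φ y) (φ x)

theorem f_zero : f 0 = 0 := by
  simp [f]

theorem continuous_f : Continuous f := by
  unfold f
  fun_prop (disch := norm_num)

theorem one_lt_sqrt_one_add_sqrt {y : ℝ} (hy : 0 < y) : 1 < √(1 + √y) := by
  rw [lt_sqrt zero_le_one, one_pow, lt_add_iff_pos_right]
  exact sqrt_pos.2 hy

-- `f'(y) = (√(1 + √y) + 1) / √y`, and `(√(1 + √y) + 1) (√(1 + √y) - 1) = √y`.
theorem hasDerivAt_f {y : ℝ} (hy : 0 < y) : HasDerivAt f (√(1 + √y) - 1)⁻¹ y := by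
  have hS : √(1 + √y) - 1 ≠ 0 := (sub_pos.2 (one_lt_sqrt_one_add_sqrt hy)).ne'
  have hsq : √(1 + √y) ^ 2 = 1 + √y := sq_sqrt (by positivity)
  have hsqrt := hasDerivAt_sqrt hy.ne'
  have hpow := ((hasDerivAt_rpow_const (p := (3 : ℝ) / 2) (x := 1 + √y)
    (Or.inl (by positivity))).comp y (hsqrt.const_add 1))
  refine (((hpow.sub_const 1).const_mul (4 / 3)).add (hsqrt.const_mul 2)).congr_deriv ?_
  rw [show (3 : ℝ) / 2 - 1 = 1 / 2 by norm_num, ← sqrt_eq_rpow]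
  field_simp
  linear_combination 4 * hsq

theorem strictMonoOn_f : StrictMonoOn f (Ici 0) := by
  refine strictMonoOn_of_deriv_pos (convex_Ici 0) continuous_f.continuousOn fun y hy => ?_
  rw [interior_Ici] at hy
  rw [(hasDerivAt_f hy).deriv]
  exact inv_pos.2 (sub_pos.2 (one_lt_sqrt_one_add_sqrt hy))

theorem lipschitzOnWith_f {z : ℝ} (hz : 0 < z) :
    LipschitzOnWith (√(1 + √z) - 1)⁻¹.toNNReal f (Ici z) := by
  refine (convex_Ici z).lipschitzOnWith_of_nnnorm_hasDerivWithin_le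
    (fun y hy => (hasDerivAt_f (hz.trans_le hy)).hasDerivWithinAt) fun y hy => ?_
  have hS := one_lt_sqrt_one_add_sqrt hz
  have hSy : √(1 + √z) ≤ √(1 + √y) := by gcongr; exact hy
  rw [← NNReal.coe_le_coe, coe_nnnorm, Real.coe_toNNReal _ (by positivity), Real.norm_eq_abs,
    abs_of_pos (inv_pos.2 (sub_pos.2 (hS.trans_le hSy)))]
  gcongr

theorem sqrt_mul_abs_lt_of_timelike {z a b : ℝ} (ha : 0 < a)
    (h : -a ^ 2 + (1 + √z) * b ^ 2 < 0) : √(1 + √z) * |b| < a := by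
  have hS : 0 ≤ √(1 + √z) * |b| := by positivity
  have hsq : (√(1 + √z) * |b|) ^ 2 = (1 + √z) * b ^ 2 := by
    rw [mul_pow, sq_abs, sq_sqrt (by positivity)]
  nlinarith

theorem sub_pos_of_timelike {z a b c : ℝ} (ha : 0 < a)
    (h : -a ^ 2 + (1 + √z) * b ^ 2 < 0) (hc : |c| ≤ |b|) : 0 < a - c := by
  have hSb := sqrt_mul_abs_lt_of_timelike ha h
  have hS : 1 ≤ √(1 + √z) := one_le_sqrt.2 (le_add_of_nonneg_right (sqrt_nonneg z))
  nlinarith [le_abs_self c, abs_nonneg b]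

theorem le_inv_mul_sub_of_timelike {z a b c : ℝ} (hz : 0 < z) (ha : 0 < a)
    (h : -a ^ 2 + (1 + √z) * b ^ 2 < 0) (hc : |c| ≤ |b|) :
    c ≤ (√(1 + √z) - 1)⁻¹ * (a - c) := by
  have hS := one_lt_sqrt_one_add_sqrt hz
  have hSb := sqrt_mul_abs_lt_of_timelike ha h
  rw [le_inv_mul_iff₀ (by linarith)]
  nlinarith [le_abs_self c]

def IsTimelikeOn (α β : ℝ → ℝ) (s : Set ℝ) : Prop :=
  ∀ᵐ τ ∂volume.restrict s,
    0 < deriv α τ ∧ -(deriv α τ) ^ 2 + rho (α τ) (β τ) * (deriv β τ) ^ 2 < 0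

namespace IsTimelikeOn

variable {α β : ℝ → ℝ} {a b : ℝ} {Kα Kβ : NNReal}

theorem mono {s t : Set ℝ} (h : IsTimelikeOn α β s) (hts : t ⊆ s) : IsTimelikeOn α β t :=
  ae_restrict_of_ae_restrict_of_subset hts h

theorem ae_hasDerivAt (hα : LipschitzOnWith Kα α (Icc a b)) (hβ : LipschitzOnWith Kβ β (Icc a b))
    (htl : IsTimelikeOn α β (Icc a b)) :
    ∀ᵐ τ, τ ∈ Ioo a b → ∃ v c : ℝ, HasDerivAt (fun s => α s - |β s|) (v - c) τ ∧
      HasDerivAt (fun s => |β s|) c τ ∧ 0 < v - c ∧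
      (0 < α τ - |β τ| → c ≤ (√(1 + √(α τ - |β τ|)) - 1)⁻¹ * (v - c)) := by
  have hdiff {φ : ℝ → ℝ} {K : NNReal} (hφ : LipschitzOnWith K φ (Icc a b)) :
      ∀ᵐ τ, τ ∈ Ioo a b → DifferentiableAt ℝ φ τ := by
    filter_upwards [(hφ.mono Ioo_subset_Icc_self).ae_differentiableWithinAt_of_mem] with τ hτ hτab
    exact (hτ hτab).differentiableAt (isOpen_Ioo.mem_nhds hτab)
  rw [IsTimelikeOn, ae_restrict_iff' measurableSet_Icc] at htl
  filter_upwards [hdiff hα, hdiff hβ, hdiff hβ.abs, htl]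
    with τ hα' hβ' habs' htl' hτ
  obtain ⟨hpos, hineq⟩ := htl' (Ioo_subset_Icc_self hτ)
  have hβ'' := (habs' hτ).hasDerivAt
  have hc := abs_deriv_abs_le (hβ' hτ).hasDerivAt hβ''
  refine ⟨deriv α τ, deriv (fun s => |β s|) τ, (hα' hτ).hasDerivAt.sub hβ'', hβ'',
    sub_pos_of_timelike hpos hineq hc, fun hz => ?_⟩
  rw [rho, max_eq_left hz.le] at hineq
  exact le_inv_mul_sub_of_timelike hz hpos hineq hc

theorem strictMonoOn_sub_abs (hα : LipschitzOnWith Kα α (Icc a b))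
    (hβ : LipschitzOnWith Kβ β (Icc a b)) (htl : IsTimelikeOn α β (Icc a b)) :
    StrictMonoOn (fun s => α s - |β s|) (Icc a b) := by
  intro u hu v hv huv
  have hZ := hα.sub hβ.abs
  refine (hZ.absolutelyContinuousOnInterval_of_le (hu.1.trans hu.2)).strictMonoOn_of_ae_deriv_pos
    ?_ hu hv huv
  filter_upwards [htl.ae_hasDerivAt hα hβ] with τ hτ hτab
  obtain ⟨_, _, hZ', -, hpos, -⟩ := hτ hτab
  rwa [hZ'.deriv]

theorem monotoneOn_f_sub_abs_sub_abs (hα : LipschitzOnWith Kα α (Icc a b))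
    (hβ : LipschitzOnWith Kβ β (Icc a b)) (htl : IsTimelikeOn α β (Icc a b))
    (hpos : 0 < α a - |β a|) :
    MonotoneOn (fun s => f (α s - |β s|) - |β s|) (Icc a b) := by
  intro u hu v hv huv
  have hZ_ge : ∀ s ∈ Icc a b, α a - |β a| ≤ α s - |β s| := fun s hs =>
    (strictMonoOn_sub_abs hα hβ htl).monotoneOn (left_mem_Icc.2 (hs.1.trans hs.2)) hs hs.1
  have habs := hβ.abs
  have hH := ((lipschitzOnWith_f hpos).comp (hα.sub habs) hZ_ge).sub habs
  refine (hH.absolutelyContinuousOnInterval_of_le (hu.1.trans hu.2)).monotoneOn_of_ae_deriv_nonneg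
    ?_ hu hv huv
  filter_upwards [htl.ae_hasDerivAt hα hβ] with τ hτ hτab
  obtain ⟨_, _, hZ', hc, -, hle⟩ := hτ hτab
  have hzτ : 0 < α τ - |β τ| := hpos.trans_le (hZ_ge τ (Ioo_subset_Icc_self hτab))
  rw [(((hasDerivAt_f hzτ).comp τ hZ').fun_sub hc).deriv]
  linarith [hle hzτ]

theorem abs_le_f_sub_abs {T : ℝ} (hT : 0 < T) (hα : LipschitzOnWith Kα α (Icc 0 T))
    (hβ : LipschitzOnWith Kβ β (Icc 0 T)) (htl : IsTimelikeOn α β (Icc 0 T)) (hα0 : α 0 = 0)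
    (hβ0 : β 0 = 0) : |β T| ≤ f (α T - |β T|) := by
  set H := fun s => f (α s - |β s|) - |β s|
  have hZ0 : α 0 - |β 0| = 0 := by simp [hα0, hβ0]
  have hH : ∀ δ ∈ Ioo 0 T, H δ ≤ H T := fun δ hδ => by
    have hsub : Icc δ T ⊆ Icc 0 T := Icc_subset_Icc_left hδ.1.le
    refine monotoneOn_f_sub_abs_sub_abs (hα.mono hsub) (hβ.mono hsub) (htl.mono hsub) ?_
      (left_mem_Icc.2 hδ.2.le) (right_mem_Icc.2 hδ.2.le) hδ.2.le
    rw [← hZ0]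
    exact strictMonoOn_sub_abs hα hβ htl (left_mem_Icc.2 hT.le) (Ioo_subset_Icc_self hδ) hδ.1
  -- `f` is not Lipschitz at `0`, so the comparison is made on `[δ, T]` and `δ → 0` by continuity.
  have hHcont : ContinuousOn H (Icc 0 T) :=
    (continuous_f.comp_continuousOn (hα.continuousOn.sub hβ.continuousOn.abs)).sub
      hβ.continuousOn.abs
  have := ContinuousWithinAt.closure_le (closure_Ioo hT.ne ▸ left_mem_Icc.2 hT.le)
    ((hHcont 0 (left_mem_Icc.2 hT.le)).mono Ioo_subset_Icc_self) continuousWithinAt_const hH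
  simpa [H, hα0, hβ0, f_zero] using this

end IsTimelikeOn

theorem A_disjoint_chronological_future_general (finv : ℝ → ℝ)
    (h_nonneg : ∀ s ∈ Set.Ici (0 : ℝ), finv s ∈ Set.Ici (0 : ℝ))
    (h_right : ∀ s ∈ Set.Ici (0 : ℝ), f (finv s) = s) :
    ∀ p : ℝ × ℝ, 0 < p.2 → 0 < p.1 - p.2 → p.1 - p.2 < finv p.2 →
      ¬ ∃ (T : ℝ) (γ : ℝ → ℝ × ℝ) (K : NNReal), 0 < T ∧
        LipschitzOnWith K γ (Set.Icc 0 T) ∧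
        γ 0 = (0, 0) ∧ γ T = p ∧
        (∀ᵐ s ∂(MeasureTheory.volume.restrict (Set.Icc (0 : ℝ) T)),
          0 < deriv (fun s => (γ s).1) s ∧
          -(deriv (fun s => (γ s).1) s) ^ 2 +
            rho (γ s).1 (γ s).2 * (deriv (fun s => (γ s).2) s) ^ 2 < 0) := by
  rintro p hx ht ht_lt ⟨T, γ, K, hT, hγ, hγ0, hγT, htl⟩
  have hreach : |p.2| ≤ f (p.1 - |p.2|) := by
    simpa [hγ0, hγT] using IsTimelikeOn.abs_le_f_sub_abs (α := fun s => (γ s).1)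
      (β := fun s => (γ s).2) hT (LipschitzWith.prod_fst.comp_lipschitzOnWith hγ)
      (LipschitzWith.prod_snd.comp_lipschitzOnWith hγ) htl (by simp [hγ0]) (by simp [hγ0])
  rw [abs_of_pos hx] at hreach
  have hx' : p.2 ∈ Ici 0 := hx.le
  have := strictMonoOn_f ht.le (h_nonneg p.2 hx') ht_lt
  rw [h_right p.2 hx'] at this
  linarith

/-- no future-directed Lipschitz timelike curve starting at the
origin reaches a point of A = {(t,x) : x > 0, 0 < t − x < f⁻¹(x)};
i.e. A ∩ I⁺(0) = ∅. -/
theorem A_disjoint_chronological_future (finv : ℝ → ℝ)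
    (h_nonneg : ∀ s ∈ Set.Ici (0 : ℝ), finv s ∈ Set.Ici (0 : ℝ))
    (h_left : ∀ t ∈ Set.Ici (0 : ℝ), finv (f t) = t)
    (h_right : ∀ s ∈ Set.Ici (0 : ℝ), f (finv s) = s) :
    ∀ p : ℝ × ℝ, 0 < p.2 → 0 < p.1 - p.2 → p.1 - p.2 < finv p.2 →
      ¬ ∃ (T : ℝ) (γ : ℝ → ℝ × ℝ) (K : NNReal), 0 < T ∧
        LipschitzOnWith K γ (Set.Icc 0 T) ∧
        γ 0 = (0, 0) ∧ γ T = p ∧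
        (∀ᵐ s ∂(MeasureTheory.volume.restrict (Set.Icc (0 : ℝ) T)),
          0 < deriv (fun s => (γ s).1) s ∧
          -(deriv (fun s => (γ s).1) s) ^ 2 +
            rho (γ s).1 (γ s).2 * (deriv (fun s => (γ s).2) s) ^ 2 < 0) :=
  A_disjoint_chronological_future_general finv h_nonneg h_right
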